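/- On the von Mises–Fisher model (the m-sphere of radius r in natural coordinates), the normal vectors satisfy B_κ^i(u) = (1/r) θ^i(u) and B_{κi}(u) = (1/r†) η_i(u), where θ(u) = r ξ(u), η(u) = r† ξ(u) with ξ(u) ∈ S^m the standard spherical parametrization and r† ∈ (0,1) a constant. Consequently H^{(1)}_{abκ}(u) = −(1/r†) g_{ab}(u), H^{(−1)}_{abκ}(u) = −(1/r) g_{ab}(u), and R^{(±1)}_{abcd}(u) = (1/(r r†))(g_{ad}g_{bc} − g_{ac}g_{bd}), with metric g_{ab}(u) = δ_{ab} r r† ∏_{c=1}^{a} sin² u^{c−1} (sin² u^0 = 1). -/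

import Mathlib

/-!
The spherical coordinates are recursive, `ξ(u) = (cos u⁰, sin u⁰ · ξ'(u¹, …, u^{m-1}))` with `ξ'`
the parametrization of the sphere of one dimension less. Induction along this recursion gives
`|ξ|² = 1` and the induced metric `⟨∂_a ξ, ∂_b ξ⟩ = δ_ab ∏_{c<a} sin² u^c`. Differentiating
`|ξ|² = 1` shows that `ξ` is orthogonal to every tangent vector, and differentiating
`⟨ξ, ∂_b ξ⟩ = 0` once more gives `⟨ξ, ∂_a ∂_b ξ⟩ = -⟨∂_a ξ, ∂_b ξ⟩`. As `θ = r ξ` and `η = r† ξ`,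
the metric, the Euler–Schouten curvatures and the Gauss equation are scalar multiples of these
identities.
-/

open Finset Real

noncomputable def pd {m : ℕ} (i : Fin m) (f : (Fin m → ℝ) → ℝ) (x : Fin m → ℝ) : ℝ :=
  fderiv ℝ f x (Pi.single i 1)

section PartialDerivative

variable {m : ℕ} {a : Fin m} {u : Fin m → ℝ} {f g : (Fin m → ℝ) → ℝ}

theorem HasFDerivAt.pd_eq {f' : (Fin m → ℝ) →L[ℝ] ℝ} (hf : HasFDerivAt f f' u) :
    pd a f u = f' (Pi.single a 1) := by
  rw [pd, hf.fderiv]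

theorem pd_const (c : ℝ) : pd a (fun _ => c) u = 0 := by
  simp [pd]

theorem pd_mul (hf : DifferentiableAt ℝ f u) (hg : DifferentiableAt ℝ g u) :
    pd a (fun v => f v * g v) u = pd a f u * g u + f u * pd a g u := by
  rw [pd, fderiv_fun_mul hf hg]
  simp only [add_apply, smul_apply, smul_eq_mul, pd]
  ring

theorem pd_const_mul (c : ℝ) (hf : DifferentiableAt ℝ f u) :
    pd a (fun v => c * f v) u = c * pd a f u := by
  rw [pd_mul (differentiableAt_const c) hf, pd_const]
  ring

theorem pd_sum {ι : Type*} (s : Finset ι) {F : ι → (Fin m → ℝ) → ℝ}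
    (hF : ∀ i ∈ s, DifferentiableAt ℝ (F i) u) :
    pd a (fun v => ∑ i ∈ s, F i v) u = ∑ i ∈ s, pd a (F i) u := by
  rw [pd, fderiv_fun_sum hF]
  simp [pd]

theorem pd_comp_apply {φ : ℝ → ℝ} {φ' : ℝ} {b : Fin m} (hφ : HasDerivAt φ φ' (u b)) :
    pd a (fun v => φ (v b)) u = if a = b then φ' else 0 := by
  rw [show pd a (fun v => φ (v b)) u = pd a (φ ∘ fun v => v b) u from rfl,
    (hφ.comp_hasFDerivAt u (hasFDerivAt_apply b u)).pd_eq]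
  simp [Pi.single_apply, eq_comm]

theorem HasFDerivAt.comp_tail {F : (Fin m → ℝ) → ℝ} {F' : (Fin m → ℝ) →L[ℝ] ℝ}
    {u : Fin (m + 1) → ℝ} (hF : HasFDerivAt F F' (Fin.tail u)) :
    HasFDerivAt (fun v => F (Fin.tail v))
      (F'.comp (ContinuousLinearMap.pi fun j : Fin m => ContinuousLinearMap.proj j.succ)) u :=
  hF.comp (f := ContinuousLinearMap.pi fun j : Fin m => ContinuousLinearMap.proj j.succ) u
    (ContinuousLinearMap.hasFDerivAt _)

theorem pd_zero_comp_tail {F : (Fin m → ℝ) → ℝ} {u : Fin (m + 1) → ℝ}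
    (hF : DifferentiableAt ℝ F (Fin.tail u)) :
    pd 0 (fun v => F (Fin.tail v)) u = 0 := by
  rw [hF.hasFDerivAt.comp_tail.pd_eq]
  simp only [ContinuousLinearMap.comp_apply]
  convert (fderiv ℝ F (Fin.tail u)).map_zero
  ext j
  simp [Fin.succ_ne_zero]

theorem pd_succ_comp_tail {F : (Fin m → ℝ) → ℝ} {u : Fin (m + 1) → ℝ} (j : Fin m)
    (hF : DifferentiableAt ℝ F (Fin.tail u)) :
    pd j.succ (fun v => F (Fin.tail v)) u = pd j F (Fin.tail u) := by
  rw [hF.hasFDerivAt.comp_tail.pd_eq, pd, ContinuousLinearMap.comp_apply]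
  congr 1
  ext k
  simp [Pi.single_apply]

theorem ContDiff.pd {n : WithTop ℕ∞} (hf : ContDiff ℝ (n + 1) f) (a : Fin m) :
    ContDiff ℝ n (pd a f) :=
  (hf.fderiv_right le_rfl).clm_apply contDiff_const

end PartialDerivative

section UnitNormal

variable {m : ℕ} {ι : Type*} [Fintype ι] {f : ι → (Fin m → ℝ) → ℝ}

theorem sum_mul_pd_eq_zero_of_sum_mul_self_eq_one {u : Fin m → ℝ}
    (hf : ∀ i, DifferentiableAt ℝ (f i) u) (hunit : ∀ v, ∑ i, f i v * f i v = 1) (a : Fin m) :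
    ∑ i, f i u * pd a (f i) u = 0 := by
  have h := pd_sum (a := a) (F := fun i v => f i v * f i v) univ fun i _ => (hf i).mul (hf i)
  rw [funext hunit, pd_const] at h
  simp only [pd_mul (hf _) (hf _), Finset.sum_add_distrib, mul_comm (pd a _ u)] at h
  linarith

theorem sum_mul_pd_pd_eq_neg_of_sum_mul_self_eq_one (hf : ∀ i, ContDiff ℝ 2 (f i))
    (hunit : ∀ v, ∑ i, f i v * f i v = 1) (a b : Fin m) (u : Fin m → ℝ) :
    ∑ i, f i u * pd a (pd b (f i)) u = -∑ i, pd a (f i) u * pd b (f i) u := by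
  have hdiff : ∀ i, Differentiable ℝ (f i) := fun i => (hf i).differentiable (by norm_num)
  have hdiff' : ∀ i, Differentiable ℝ (pd b (f i)) := fun i =>
    ((hf i).pd (n := 1) b).differentiable one_ne_zero
  have h := pd_sum (a := a) (u := u) (F := fun i v => f i v * pd b (f i) v) univ
    fun i _ => (hdiff i u).mul (hdiff' i u)
  rw [funext fun v => sum_mul_pd_eq_zero_of_sum_mul_self_eq_one (fun i => hdiff i v) hunit b,
    pd_const] at h
  simp only [pd_mul (hdiff _ u) (hdiff' _ u), Finset.sum_add_distrib] at h
  linarith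

end UnitNormal

theorem Fin.prod_filter_val_lt_succ {M : Type*} [CommMonoid M] {m : ℕ} (f : Fin (m + 1) → M)
    (k : ℕ) :
    ∏ e ∈ univ.filter (fun e : Fin (m + 1) => (e : ℕ) < k + 1), f e =
      f 0 * ∏ e ∈ univ.filter (fun e : Fin m => (e : ℕ) < k), f e.succ := by
  simp [Finset.prod_filter, Fin.prod_univ_succ]

noncomputable def sphereCoord : (m : ℕ) → Fin (m + 1) → (Fin m → ℝ) → ℝ
  | 0 => fun _ _ => 1
  | m + 1 => Fin.cons (fun v => cos (v 0)) fun k v => sin (v 0) * sphereCoord m k (Fin.tail v)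

section SphereCoord

variable {m : ℕ}

@[simp]
theorem sphereCoord_zero (i : Fin 1) (v : Fin 0 → ℝ) : sphereCoord 0 i v = 1 := rfl

@[simp]
theorem sphereCoord_succ_zero (v : Fin (m + 1) → ℝ) : sphereCoord (m + 1) 0 v = cos (v 0) := rfl

@[simp]
theorem sphereCoord_succ_succ (k : Fin (m + 1)) (v : Fin (m + 1) → ℝ) :
    sphereCoord (m + 1) k.succ v = sin (v 0) * sphereCoord m k (Fin.tail v) := rfl

theorem sphereCoord_apply (i : Fin (m + 1)) (u : Fin m → ℝ) :
    sphereCoord m i u =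
      (∏ e ∈ univ.filter (fun e : Fin m => (e : ℕ) < i), sin (u e)) *
        if h : (i : ℕ) < m then cos (u ⟨i, h⟩) else 1 := by
  induction m with
  | zero => simp [Fin.fin_one_eq_zero i]
  | succ m ih =>
    cases i using Fin.cases with
    | zero => simp
    | succ k =>
      rw [sphereCoord_succ_succ, ih, Fin.val_succ, Fin.prod_filter_val_lt_succ]
      by_cases h : (k : ℕ) < m <;> simp [h, Fin.tail, mul_assoc]

theorem contDiff_sphereCoord (n : WithTop ℕ∞) (i : Fin (m + 1)) :
    ContDiff ℝ n (sphereCoord m i) := by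
  induction m with
  | zero => exact contDiff_const
  | succ m ih =>
    cases i using Fin.cases with
    | zero => exact contDiff_cos.comp (contDiff_apply ℝ ℝ 0)
    | succ k =>
      exact (contDiff_sin.comp (contDiff_apply ℝ ℝ 0)).mul
        ((ih k).comp (contDiff_pi.2 fun j => contDiff_apply ℝ ℝ j.succ))

theorem sum_sphereCoord_mul_self (u : Fin m → ℝ) :
    ∑ i, sphereCoord m i u * sphereCoord m i u = 1 := by
  induction m with
  | zero => simp
  | succ m ih =>
    simp only [Fin.sum_univ_succ (n := m + 1), sphereCoord_succ_zero, sphereCoord_succ_succ,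
      mul_mul_mul_comm (sin (u 0)), ← mul_sum, ih, mul_one]
    linear_combination cos_sq_add_sin_sq (u 0)

theorem differentiableAt_sphereCoord (i : Fin (m + 1)) (u : Fin m → ℝ) :
    DifferentiableAt ℝ (sphereCoord m i) u :=
  (contDiff_sphereCoord 1 i).differentiable one_ne_zero u

theorem pd_sphereCoord_succ_zero (a : Fin (m + 1)) (u : Fin (m + 1) → ℝ) :
    pd a (sphereCoord (m + 1) 0) u = if a = 0 then -sin (u 0) else 0 :=
  pd_comp_apply (hasDerivAt_cos (u 0))

theorem pd_sphereCoord_succ_succ (a k : Fin (m + 1)) (u : Fin (m + 1) → ℝ) :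
    pd a (sphereCoord (m + 1) k.succ) u =
      (if a = 0 then cos (u 0) else 0) * sphereCoord m k (Fin.tail u) +
        sin (u 0) * pd a (fun v => sphereCoord m k (Fin.tail v)) u := by
  have hsin : DifferentiableAt ℝ (fun v : Fin (m + 1) → ℝ => sin (v 0)) u := by fun_prop
  have htail := (differentiableAt_sphereCoord k (Fin.tail u)).hasFDerivAt.comp_tail
  rw [show sphereCoord (m + 1) k.succ =
      fun v => sin (v 0) * sphereCoord m k (Fin.tail v) from rfl,
    pd_mul hsin htail.differentiableAt, pd_comp_apply (hasDerivAt_sin (u 0))]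

noncomputable def sphereMetric (m : ℕ) (u : Fin m → ℝ) (a b : Fin m) : ℝ :=
  if a = b then ∏ e ∈ univ.filter (fun e : Fin m => (e : ℕ) < a), sin (u e) ^ 2 else 0

theorem sphereMetric_of_ne {u : Fin m → ℝ} {a b : Fin m} (h : a ≠ b) : sphereMetric m u a b = 0 :=
  if_neg h

theorem sphereMetric_zero_zero (u : Fin (m + 1) → ℝ) : sphereMetric (m + 1) u 0 0 = 1 := by
  simp [sphereMetric]

theorem sphereMetric_succ_succ (u : Fin (m + 1) → ℝ) (i j : Fin m) :
    sphereMetric (m + 1) u i.succ j.succ = sin (u 0) ^ 2 * sphereMetric m (Fin.tail u) i j := by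
  simp only [sphereMetric, Fin.succ_inj, Fin.val_succ, Fin.prod_filter_val_lt_succ, mul_ite,
    mul_zero]
  rfl

theorem sum_pd_sphereCoord_mul_pd (a b : Fin m) (u : Fin m → ℝ) :
    ∑ i, pd a (sphereCoord m i) u * pd b (sphereCoord m i) u = sphereMetric m u a b := by
  induction m with
  | zero => exact a.elim0
  | succ m ih =>
    have hunit := sum_sphereCoord_mul_self (Fin.tail u)
    have hortho := fun j => sum_mul_pd_eq_zero_of_sum_mul_self_eq_one
      (fun i => differentiableAt_sphereCoord i (Fin.tail u)) sum_sphereCoord_mul_self j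
    have hortho' : ∀ j,
        ∑ i, pd j (sphereCoord m i) (Fin.tail u) * sphereCoord m i (Fin.tail u) = 0 := by
      simpa only [mul_comm] using hortho
    cases a using Fin.cases <;> cases b using Fin.cases <;>
      simp only [Fin.sum_univ_succ (n := m + 1), pd_sphereCoord_succ_zero, pd_sphereCoord_succ_succ,
        pd_zero_comp_tail (differentiableAt_sphereCoord _ _),
        pd_succ_comp_tail _ (differentiableAt_sphereCoord _ _), Fin.succ_ne_zero, ↓reduceIte,
        mul_zero, zero_mul, add_zero, zero_add, mul_mul_mul_comm, ← mul_sum, hunit, hortho, hortho',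
        ih, sphereMetric_succ_succ]
    · rw [sphereMetric_zero_zero]
      linear_combination sin_sq_add_cos_sq (u 0)
    · exact (sphereMetric_of_ne (Fin.succ_ne_zero _).symm).symm
    · exact (sphereMetric_of_ne (Fin.succ_ne_zero _)).symm
    · ring

theorem pd_const_mul_sphereCoord (c : ℝ) (a : Fin m) (i : Fin (m + 1)) :
    pd a (fun v => c * sphereCoord m i v) = fun v => c * pd a (sphereCoord m i) v :=
  funext fun v => pd_const_mul c (differentiableAt_sphereCoord i v)

theorem sum_sphereCoord_mul_pd_const_mul (c : ℝ) (a : Fin m) (u : Fin m → ℝ) :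
    ∑ i, sphereCoord m i u * pd a (fun v => c * sphereCoord m i v) u = 0 := by
  simp only [pd_const_mul_sphereCoord, mul_left_comm _ c, ← mul_sum,
    sum_mul_pd_eq_zero_of_sum_mul_self_eq_one (fun i => differentiableAt_sphereCoord i u)
      sum_sphereCoord_mul_self, mul_zero]

theorem sum_pd_const_mul_sphereCoord_mul_pd (c c' : ℝ) (a b : Fin m) (u : Fin m → ℝ) :
    ∑ i, pd a (fun v => c * sphereCoord m i v) u * pd b (fun v => c' * sphereCoord m i v) u =
      c * c' * sphereMetric m u a b := by
  simp only [pd_const_mul_sphereCoord, mul_mul_mul_comm c, ← mul_sum, sum_pd_sphereCoord_mul_pd]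

theorem sum_pd_pd_const_mul_sphereCoord_mul (c : ℝ) (a b : Fin m) (u : Fin m → ℝ) :
    ∑ i, pd a (fun v => pd b (fun w => c * sphereCoord m i w) v) u * sphereCoord m i u =
      -c * sphereMetric m u a b := by
  have hdiff : ∀ i, DifferentiableAt ℝ (pd b (sphereCoord m i)) u := fun i =>
    ((contDiff_sphereCoord _ i).pd (n := 1) b).differentiable one_ne_zero u
  simp only [pd_const_mul_sphereCoord, pd_const_mul c (hdiff _), mul_comm _ (sphereCoord m _ u),
    mul_left_comm _ c, ← mul_sum, sum_mul_pd_pd_eq_neg_of_sum_mul_self_eq_one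
      (fun i => contDiff_sphereCoord 2 i) sum_sphereCoord_mul_self, sum_pd_sphereCoord_mul_pd]
  ring

end SphereCoord

theorem stmt16_general {m : ℕ} (r rd : ℝ) (hr : 0 < r) (hrd0 : 0 < rd)
    (ξ : Fin (m + 1) → (Fin m → ℝ) → ℝ)
    (hξ : ∀ i u, ξ i u =
      (∏ e ∈ Finset.univ.filter (fun e : Fin m => (e : ℕ) < (i : ℕ)), Real.sin (u e)) *
      (if h : (i : ℕ) < m then Real.cos (u ⟨i, h⟩) else 1))
    (θ η : Fin (m + 1) → (Fin m → ℝ) → ℝ)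
    (hθ : ∀ i u, θ i u = r * ξ i u) (hη : ∀ i u, η i u = rd * ξ i u)
    (g H1 Hm1 : Fin m → Fin m → (Fin m → ℝ) → ℝ)
    (hg : ∀ a b u, g a b u = ∑ i, pd a (θ i) u * pd b (η i) u)
    (hH1 : ∀ a b u, H1 a b u = ∑ i, pd a (fun v => pd b (θ i) v) u * ξ i u)
    (hHm1 : ∀ a b u, Hm1 a b u = ∑ i, pd a (fun v => pd b (η i) v) u * ξ i u) :
    ∀ (a b c e : Fin m) (u : Fin m → ℝ),
      (∑ i, ξ i u * pd a (η i) u = 0) ∧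
      (∑ i, ξ i u * pd a (θ i) u = 0) ∧
      (∑ i, ξ i u * ξ i u = 1) ∧
      g a b u = (if a = b then
        r * rd * ∏ e' ∈ Finset.univ.filter (fun e' : Fin m => (e' : ℕ) < (a : ℕ)),
          Real.sin (u e') ^ 2 else 0) ∧
      H1 a b u = -(1 / rd) * g a b u ∧
      Hm1 a b u = -(1 / r) * g a b u ∧
      Hm1 a e u * H1 b c u - Hm1 b e u * H1 a c u
        = (1 / (r * rd)) * (g a e u * g b c u - g a c u * g b e u) := by
  obtain rfl : ξ = sphereCoord m := funext₂ fun i u => (hξ i u).trans (sphereCoord_apply i u).symm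
  obtain rfl : θ = fun i v => r * sphereCoord m i v := funext₂ hθ
  obtain rfl : η = fun i v => rd * sphereCoord m i v := funext₂ hη
  intro a b c e u
  have hg' : ∀ a b, g a b u = r * rd * sphereMetric m u a b := fun a b =>
    (hg a b u).trans (sum_pd_const_mul_sphereCoord_mul_pd r rd a b u)
  have hH1' : ∀ a b, H1 a b u = -r * sphereMetric m u a b := fun a b =>
    (hH1 a b u).trans (sum_pd_pd_const_mul_sphereCoord_mul r a b u)
  have hHm1' : ∀ a b, Hm1 a b u = -rd * sphereMetric m u a b := fun a b =>
    (hHm1 a b u).trans (sum_pd_pd_const_mul_sphereCoord_mul rd a b u)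
  refine ⟨sum_sphereCoord_mul_pd_const_mul rd a u, sum_sphereCoord_mul_pd_const_mul r a u,
    sum_sphereCoord_mul_self u, ?_, ?_, ?_, ?_⟩
  · rw [hg', sphereMetric, mul_ite, mul_zero]
  · rw [hH1', hg']
    field_simp
  · rw [hHm1', hg']
    field_simp
  · simp only [hH1', hHm1', hg']
    field_simp

/-- for the von Mises–Fisher model, `θ(u) = r ξ(u)`, `η(u) = r† ξ(u)` with
`ξ(u) ∈ S^m` the standard spherical parametrization, the vector `ξ = (1/r)θ = (1/r†)η` is
the unit normal (orthogonal to all tangent vectors, of squared length 1), the metric is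
`g_{ab} = δ_{ab} r r† ∏_{c<a} sin² u^c`, the Euler–Schouten curvatures are
`H^{(1)}_{abκ} = −(1/r†) g_{ab}`, `H^{(−1)}_{abκ} = −(1/r) g_{ab}`, and by the Gauss
equation `R^{(±1)}_{abcd} = (1/(r r†))(g_{ad}g_{bc} − g_{ac}g_{bd})`. -/
theorem stmt16 {m : ℕ} (hm : 0 < m) (r rd : ℝ) (hr : 0 < r) (hrd0 : 0 < rd) (hrd1 : rd < 1)
    (ξ : Fin (m + 1) → (Fin m → ℝ) → ℝ)
    (hξ : ∀ i u, ξ i u =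
      (∏ e ∈ Finset.univ.filter (fun e : Fin m => (e : ℕ) < (i : ℕ)), Real.sin (u e)) *
      (if h : (i : ℕ) < m then Real.cos (u ⟨i, h⟩) else 1))
    (θ η : Fin (m + 1) → (Fin m → ℝ) → ℝ)
    (hθ : ∀ i u, θ i u = r * ξ i u) (hη : ∀ i u, η i u = rd * ξ i u)
    (g H1 Hm1 : Fin m → Fin m → (Fin m → ℝ) → ℝ)
    (hg : ∀ a b u, g a b u = ∑ i, pd a (θ i) u * pd b (η i) u)
    (hH1 : ∀ a b u, H1 a b u = ∑ i, pd a (fun v => pd b (θ i) v) u * ξ i u)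
    (hHm1 : ∀ a b u, Hm1 a b u = ∑ i, pd a (fun v => pd b (η i) v) u * ξ i u) :
    ∀ (a b c e : Fin m) (u : Fin m → ℝ),
      (∑ i, ξ i u * pd a (η i) u = 0) ∧
      (∑ i, ξ i u * pd a (θ i) u = 0) ∧
      (∑ i, ξ i u * ξ i u = 1) ∧
      g a b u = (if a = b then
        r * rd * ∏ e' ∈ Finset.univ.filter (fun e' : Fin m => (e' : ℕ) < (a : ℕ)),
          Real.sin (u e') ^ 2 else 0) ∧
      H1 a b u = -(1 / rd) * g a b u ∧
      Hm1 a b u = -(1 / r) * g a b u ∧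
      Hm1 a e u * H1 b c u - Hm1 b e u * H1 a c u
        = (1 / (r * rd)) * (g a e u * g b c u - g a c u * g b e u) :=
  stmt16_general r rd hr hrd0 ξ hξ θ η hθ hη g H1 Hm1 hg hH1 hHm1
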